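/- arXiv:1710.07785 — 7 statements merged into one kernel-verified Lean document; each statement's English description precedes it below -/
import Mathlib

section
/- A linear code C of length n over R is skew cyclic (σ(C) = C) if and only if its Gray image Ψ(C) is a skew quasi-cyclic code of length 4n over F_q of index 4 (π₄(Ψ(C)) = Ψ(C)). -/
/-- The standard form `a + u*b + v*c + u*v*d` of an element of
`R = F_q + uF_q + vF_q + uvF_q`. -/
def stdForm (F R : Type*) [Field F] [CommRing R] [Algebra F R] (u v : R)
    (x : F × F × F × F) : R :=
  algebraMap F R x.1 + u * algebraMap F R x.2.1 + v * algebraMap F R x.2.2.1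
    + u * v * algebraMap F R x.2.2.2

/-- The Gray map extended to vectors. -/
def grayV {F R : Type*} (Ψ : R → (Fin 4 → F)) {n : ℕ} (x : Fin n → R) :
    Fin 4 × Fin n → F :=
  fun ji => Ψ (x ji.2) ji.1

/-- The skew cyclic shift `σ` with respect to `θ`. -/
def skewShift {R : Type*} (θ : R → R) {n : ℕ} [NeZero n] (x : Fin n → R) : Fin n → R :=
  fun i => θ (x (i - 1))

/-- The index-4 skew quasi-cyclic shift `π₄` on `(F_qⁿ)⁴`, applying the skew cyclic shift
(with Frobenius `x ↦ x^(p^t)`) simultaneously to each of the 4 blocks. -/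
def quasiShift4 {F : Type*} [Monoid F] (p t : ℕ) {n : ℕ} [NeZero n]
    (y : Fin 4 × Fin n → F) : Fin 4 × Fin n → F :=
  fun ji => (y (ji.1, ji.2 - 1)) ^ p ^ t

/-! The Gray map intertwines `θ` with the coordinatewise Frobenius `x ↦ x ^ p ^ t`, because
`θ` raises all four standard coordinates to that power and the Gray coordinates are sums of
them; hence `Ψ ∘ σ = π₄ ∘ Ψ` on vectors. As `Ψ` is injective, `σ(C) = C` is equivalent to
`Ψ(σ(C)) = Ψ(C)`, that is, to `π₄(Ψ(C)) = Ψ(C)`. -/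

theorem Function.Semiconj.image_eq_self_iff {α β : Type*} {f : α → β} {fa : α → α}
    {fb : β → β} (h : Function.Semiconj f fa fb) (hf : Function.Injective f) (s : Set α) :
    fa '' s = s ↔ fb '' (f '' s) = f '' s := by
  rw [← h.set_image s]
  exact (Set.image_injective.mpr hf).eq_iff.symm

section GrayMap

variable {F R : Type*} [Field F] [CommRing R] [Algebra F R] {u v : R} {Ψ : R → Fin 4 → F}

theorem gray_injective (hs : Function.Surjective (stdForm F R u v))
    (hΨ : ∀ a b c d : F,
      Ψ (stdForm F R u v (a, b, c, d)) = ![a, a + b, a + c, a + b + c + d]) :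
    Function.Injective Ψ := by
  refine Function.Injective.of_comp_right (fun ⟨a, b, c, d⟩ ⟨a', b', c', d'⟩ h => ?_) hs
  have h' := funext_iff.mp ((hΨ a b c d).symm.trans (h.trans (hΨ a' b' c' d')))
  have h0 : a = a' := by simpa using h' 0
  have h1 : a + b = a' + b' := by simpa using h' 1
  have h2 : a + c = a' + c' := by simpa using h' 2
  have h3 : a + b + c + d = a' + b' + c' + d' := by simpa using h' 3
  subst h0
  obtain rfl : b = b' := add_left_cancel h1
  obtain rfl : c = c' := add_left_cancel h2
  obtain rfl : d = d' := add_left_cancel h3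
  rfl

theorem gray_apply_of_stdForm_pow {p t : ℕ} [ExpChar F p] (θ : R → R)
    (hs : Function.Surjective (stdForm F R u v))
    (hθ : ∀ a b c d : F, θ (stdForm F R u v (a, b, c, d)) =
      stdForm F R u v (a ^ p ^ t, b ^ p ^ t, c ^ p ^ t, d ^ p ^ t))
    (hΨ : ∀ a b c d : F,
      Ψ (stdForm F R u v (a, b, c, d)) = ![a, a + b, a + c, a + b + c + d])
    (r : R) (j : Fin 4) : Ψ (θ r) j = Ψ r j ^ p ^ t := by
  obtain ⟨⟨a, b, c, d⟩, rfl⟩ := hs r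
  rw [hθ, hΨ, hΨ]
  fin_cases j <;> simp [add_pow_expChar_pow]

end GrayMap

theorem grayV_injective {F R : Type*} {Ψ : R → Fin 4 → F} (hΨ : Function.Injective Ψ)
    (n : ℕ) : Function.Injective (grayV Ψ (n := n)) :=
  fun _ _ h => funext fun i => hΨ <| funext fun j => congrFun h (j, i)

theorem semiconj_grayV_skewShift {F R : Type*} [Monoid F] {p t : ℕ} {θ : R → R}
    {Ψ : R → Fin 4 → F} (h : ∀ r j, Ψ (θ r) j = Ψ r j ^ p ^ t) (n : ℕ) [NeZero n] :
    Function.Semiconj (grayV Ψ) (skewShift θ (n := n)) (quasiShift4 p t) :=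
  fun x => funext fun ji => h (x (ji.2 - 1)) ji.1

theorem stmt7_general (p m t : ℕ) (hp : p.Prime)
    (F : Type*) [Field F] [Fintype F] (hF : Fintype.card F = p ^ m)
    (R : Type*) [CommRing R] [Algebra F R] (u v : R)
    (hbij : Function.Bijective (stdForm F R u v))
    (θ : R → R)
    (hθ : ∀ a b c d : F, θ (stdForm F R u v (a, b, c, d)) =
      stdForm F R u v (a ^ p ^ t, b ^ p ^ t, c ^ p ^ t, d ^ p ^ t))
    (Ψ : R → (Fin 4 → F))
    (hΨ : ∀ a b c d : F,
      Ψ (stdForm F R u v (a, b, c, d)) = ![a, a + b, a + c, a + b + c + d])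
    (n : ℕ) [NeZero n] :
    ∀ C : Submodule R (Fin n → R),
      skewShift θ '' (C : Set (Fin n → R)) = C ↔
        quasiShift4 p t '' (grayV Ψ '' (C : Set (Fin n → R))) =
          grayV Ψ '' (C : Set (Fin n → R)) := by
  intro C
  have : Fact p.Prime := ⟨hp⟩
  have : CharP F p := charP_of_card_eq_prime_pow hF
  have hsemiconj := semiconj_grayV_skewShift (gray_apply_of_stdForm_pow θ hbij.2 hθ hΨ) n
  exact hsemiconj.image_eq_self_iff (grayV_injective (gray_injective hbij.2 hΨ) n) C

theorem stmt7 (p m t : ℕ) (hp : p.Prime) (hodd : p ≠ 2) (hm : 0 < m)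
    (ht : 0 < t) (htm : t ∣ m)
    (F : Type*) [Field F] [Fintype F] (hF : Fintype.card F = p ^ m)
    (R : Type*) [CommRing R] [Algebra F R] (u v : R)
    (hu : u * u = u) (hv : v * v = v)
    (hbij : Function.Bijective (stdForm F R u v))
    (θ : R → R)
    (hθ : ∀ a b c d : F, θ (stdForm F R u v (a, b, c, d)) =
      stdForm F R u v (a ^ p ^ t, b ^ p ^ t, c ^ p ^ t, d ^ p ^ t))
    (Ψ : R → (Fin 4 → F))
    (hΨ : ∀ a b c d : F,
      Ψ (stdForm F R u v (a, b, c, d)) = ![a, a + b, a + c, a + b + c + d])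
    (n : ℕ) [NeZero n] :
    ∀ C : Submodule R (Fin n → R),
      skewShift θ '' (C : Set (Fin n → R)) = C ↔
        quasiShift4 p t '' (grayV Ψ '' (C : Set (Fin n → R))) =
          grayV Ψ '' (C : Set (Fin n → R)) :=
  stmt7_general p m t hp F hF R u v hbij θ hθ Ψ hΨ n
end

section
/- If the automorphism θ_t has order 3, then for every r ∈ Rⁿ the permuted Gray map Ψ_π satisfies Ψ_π(σ(r)) = σ'⁴(Ψ_π(r)), where σ is the skew cyclic shift on Rⁿ and σ' is the skew cyclic shift on F_q^{4n}. -/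
/-- The permuted Gray map `Ψ_π : Rⁿ → F_q^{4n}`, interleaving the four Gray components
of each coordinate (coordinate `i` occupies positions `4i, 4i+1, 4i+2, 4i+3`). -/
def grayPerm {F R : Type*} (Ψ : R → (Fin 4 → F)) {n : ℕ} (x : Fin n → R)
    (k : Fin (4 * n)) : F :=
  Ψ (x ⟨(k : ℕ) / 4, by omega⟩) ⟨(k : ℕ) % 4, by omega⟩

/-- The skew cyclic shift `σ'` on `F_q^{4n}` with Frobenius `x ↦ x^(p^t)`. -/
def skewShiftF {F : Type*} [Monoid F] (p t : ℕ) {N : ℕ} [NeZero N]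
    (y : Fin N → F) : Fin N → F :=
  fun k => (y (k - 1)) ^ p ^ t

theorem pow_pow_succ_eq_of_card_eq_pow {K : Type*} [Field K] [Fintype K] {s j : ℕ}
    (hK : Fintype.card K = s ^ j) (a : K) : a ^ s ^ (j + 1) = a ^ s := by
  rw [pow_succ, pow_mul, ← hK, FiniteField.pow_card]

section

open Fin.NatCast

theorem skewShiftF_iterate_apply {F : Type*} [Monoid F] (p t : ℕ) {N : ℕ} [NeZero N]
    (y : Fin N → F) (j : ℕ) (k : Fin N) :
    (skewShiftF p t)^[j] y k = y (k - j) ^ (p ^ t) ^ j := by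
  induction j generalizing k with
  | zero => simp
  | succ j ih =>
    rw [Function.iterate_succ_apply', skewShiftF, ih, ← pow_mul, ← pow_succ, Nat.cast_succ,
      sub_sub, add_comm]

theorem Fin.val_sub_natCast_of_le {N b : ℕ} [NeZero N] (k : Fin N) (hb : b ≤ N) :
    ((k - b : Fin N) : ℕ) = (k + N - b) % N := by
  rw [Fin.val_sub, Fin.val_natCast]
  rcases hb.lt_or_eq with hb | rfl
  · rw [Nat.mod_eq_of_lt hb]; congr 1; omega
  · simp

theorem grayPerm_apply_sub_four {F R : Type*} (Ψ : R → (Fin 4 → F)) {n : ℕ} [NeZero n]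
    [NeZero (4 * n)] (x : Fin n → R) (k : Fin (4 * n)) :
    grayPerm Ψ x (k - (4 : ℕ)) = grayPerm Ψ (fun i => x (i - 1)) k := by
  have hn : 0 < n := Nat.pos_of_neZero n
  have hk := Fin.val_sub_natCast_of_le k (by omega : 4 ≤ 4 * n)
  rw [Nat.mod_mul, show ((k : ℕ) + 4 * n - 4) % 4 = k % 4 by omega,
    show ((k : ℕ) + 4 * n - 4) / 4 = k / 4 + n - 1 by omega] at hk
  have h1 := Fin.val_sub_natCast_of_le (⟨k / 4, by omega⟩ : Fin n) (b := 1) (by omega)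
  rw [Nat.cast_one] at h1
  unfold grayPerm
  congr 2
  · ext
    simp only [h1, hk]
    omega
  · rw [hk]; omega

end

theorem gray_comp_eq_of_stdForm {F R : Type*} [Field F] [CommRing R] [Algebra F R] {u v : R}
    (hsurj : Function.Surjective (stdForm F R u v)) (φ : F →+ F) {θ : R → R}
    (hθ : ∀ a b c d : F,
      θ (stdForm F R u v (a, b, c, d)) = stdForm F R u v (φ a, φ b, φ c, φ d))
    {Ψ : R → (Fin 4 → F)}
    (hΨ : ∀ a b c d : F,
      Ψ (stdForm F R u v (a, b, c, d)) = ![a, a + b, a + c, a + b + c + d])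
    (r : R) : Ψ (θ r) = φ ∘ Ψ r := by
  obtain ⟨⟨a, b, c, d⟩, rfl⟩ := hsurj r
  rw [hθ, hΨ, hΨ]
  ext j
  fin_cases j <;> simp

theorem stmt8_general (p m t : ℕ) (hp : p.Prime) (hord3 : m = 3 * t)
    (F : Type*) [Field F] [Fintype F] (hF : Fintype.card F = p ^ m)
    (R : Type*) [CommRing R] [Algebra F R] (u v : R)
    (hbij : Function.Bijective (stdForm F R u v))
    (θ : R → R)
    (hθ : ∀ a b c d : F, θ (stdForm F R u v (a, b, c, d)) =
      stdForm F R u v (a ^ p ^ t, b ^ p ^ t, c ^ p ^ t, d ^ p ^ t))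
    (Ψ : R → (Fin 4 → F))
    (hΨ : ∀ a b c d : F,
      Ψ (stdForm F R u v (a, b, c, d)) = ![a, a + b, a + c, a + b + c + d])
    (n : ℕ) [NeZero n] [NeZero (4 * n)] :
    ∀ x : Fin n → R,
      grayPerm Ψ (skewShift θ x) = (skewShiftF p t (N := 4 * n))^[4] (grayPerm Ψ x) := by
  have : Fact p.Prime := ⟨hp⟩
  have : CharP F p := charP_of_card_eq_prime_pow hF
  have hcard : Fintype.card F = (p ^ t) ^ 3 := by rw [hF, hord3, mul_comm, pow_mul]
  have hΨθ := gray_comp_eq_of_stdForm hbij.2 (iterateFrobenius F p t).toAddMonoidHom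
    (by simpa only [RingHom.toAddMonoidHom_eq_coe, AddMonoidHom.coe_coe, iterateFrobenius_def]
      using hθ) hΨ
  intro x
  funext k
  calc grayPerm Ψ (skewShift θ x) k = grayPerm Ψ (fun i => x (i - 1)) k ^ p ^ t :=
        congrFun (hΨθ _) _
    _ = grayPerm Ψ (fun i => x (i - 1)) k ^ (p ^ t) ^ 4 :=
        (pow_pow_succ_eq_of_card_eq_pow hcard _).symm
    _ = _ := by rw [skewShiftF_iterate_apply, grayPerm_apply_sub_four]

theorem stmt8 (p m t : ℕ) (hp : p.Prime) (hodd : p ≠ 2)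
    (ht : 0 < t) (hord3 : m = 3 * t)
    (F : Type*) [Field F] [Fintype F] (hF : Fintype.card F = p ^ m)
    (R : Type*) [CommRing R] [Algebra F R] (u v : R)
    (hu : u * u = u) (hv : v * v = v)
    (hbij : Function.Bijective (stdForm F R u v))
    (θ : R → R)
    (hθ : ∀ a b c d : F, θ (stdForm F R u v (a, b, c, d)) =
      stdForm F R u v (a ^ p ^ t, b ^ p ^ t, c ^ p ^ t, d ^ p ^ t))
    (Ψ : R → (Fin 4 → F))
    (hΨ : ∀ a b c d : F,
      Ψ (stdForm F R u v (a, b, c, d)) = ![a, a + b, a + c, a + b + c + d])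
    (n : ℕ) [NeZero n] [NeZero (4 * n)] :
    ∀ x : Fin n → R,
      grayPerm Ψ (skewShift θ x) = (skewShiftF p t (N := 4 * n))^[4] (grayPerm Ψ x) :=
  stmt8_general p m t hp hord3 F hF R u v hbij θ hθ Ψ hΨ n
end

section
/- Let C = (1-u-v+uv)C₁ ⊕ (u-uv)C₂ ⊕ (v-uv)C₃ ⊕ uvC₄ be a linear code of length n over R, where C₁, C₂, C₃, C₄ are linear codes of length n over F_q. Then C is a skew cyclic code over R (with respect to θ_t) if and only if C₁, C₂, C₃, C₄ are all skew cyclic codes over F_q (with respect to the Frobenius x ↦ x^{p^t}). -/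
/-- The code `e₁C₁ ⊕ e₂C₂ ⊕ e₃C₃ ⊕ e₄C₄` over `R`, where `e₁ = 1-u-v+uv`, `e₂ = u-uv`,
`e₃ = v-uv`, `e₄ = uv`. -/
def combSet (F R : Type*) [Field F] [CommRing R] [Algebra F R] (u v : R) {n : ℕ}
    (C₁ C₂ C₃ C₄ : Set (Fin n → F)) : Set (Fin n → R) :=
  {x | ∃ a ∈ C₁, ∃ b ∈ C₂, ∃ c ∈ C₃, ∃ d ∈ C₄, x = fun i =>
    (1 - u - v + u * v) * algebraMap F R (a i) + (u - u * v) * algebraMap F R (b i)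
      + (v - u * v) * algebraMap F R (c i) + u * v * algebraMap F R (d i)}

/-!
Writing `x = e₁a + e₂b + e₃c + e₄d` in the idempotent coordinates `(a, b, c, d)` (an invertible
linear change of the standard coordinates) identifies `Rⁿ` with `(F_qⁿ)⁴`. Since `x ↦ x ^ p ^ t`
is additive in characteristic `p`, `θ` acts as the Frobenius on each idempotent coordinate, so
the skew shift of `e₁C₁ ⊕ e₂C₂ ⊕ e₃C₃ ⊕ e₄C₄` is `e₁σ(C₁) ⊕ e₂σ(C₂) ⊕ e₃σ(C₃) ⊕ e₄σ(C₄)`, and a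
direct sum of nonempty components determines its components.
-/

section IdempotentDecomposition

open Set Function

variable {F R : Type*} [Field F] [CommRing R] [Algebra F R] (u v : R)

def idempotentForm (x : F × F × F × F) : R :=
  (1 - u - v + u * v) * algebraMap F R x.1 + (u - u * v) * algebraMap F R x.2.1
    + (v - u * v) * algebraMap F R x.2.2.1 + u * v * algebraMap F R x.2.2.2

lemma idempotentForm_eq_stdForm (a b c d : F) :
    idempotentForm u v (a, b, c, d) = stdForm F R u v (a, b - a, c - a, a - b - c + d) := by
  simp only [idempotentForm, stdForm, map_sub, map_add]
  ring

lemma idempotentForm_injective (hinj : Injective (stdForm F R u v)) :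
    Injective (idempotentForm u v : F × F × F × F → R) := by
  rintro ⟨a, b, c, d⟩ ⟨a', b', c', d'⟩ h
  rw [idempotentForm_eq_stdForm, idempotentForm_eq_stdForm] at h
  obtain ⟨rfl, hb, hc, hd⟩ : a = a' ∧ _ := by simpa only [Prod.mk.injEq] using hinj h
  obtain rfl := sub_left_injective hb
  obtain rfl := sub_left_injective hc
  obtain rfl := add_left_cancel hd
  rfl

lemma apply_idempotentForm (φ : F →+* F) {θ : R → R}
    (hθ : ∀ a b c d : F, θ (stdForm F R u v (a, b, c, d)) = stdForm F R u v (φ a, φ b, φ c, φ d))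
    (a b c d : F) :
    θ (idempotentForm u v (a, b, c, d)) = idempotentForm u v (φ a, φ b, φ c, φ d) := by
  rw [idempotentForm_eq_stdForm, hθ, idempotentForm_eq_stdForm]
  simp only [map_sub, map_add]

variable {ι : Type*}

def idempotentFormVec (x : (ι → F) × (ι → F) × (ι → F) × (ι → F)) : ι → R :=
  fun i => idempotentForm u v (x.1 i, x.2.1 i, x.2.2.1 i, x.2.2.2 i)

lemma idempotentFormVec_injective (hinj : Injective (stdForm F R u v)) :
    Injective (idempotentFormVec u v : (ι → F) × (ι → F) × (ι → F) × (ι → F) → ι → R) := by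
  rintro ⟨a, b, c, d⟩ ⟨a', b', c', d'⟩ h
  have h' := fun i => idempotentForm_injective u v hinj (congrFun h i)
  simp only [Prod.mk.injEq] at h' ⊢
  exact ⟨funext fun i => (h' i).1, funext fun i => (h' i).2.1, funext fun i => (h' i).2.2.1,
    funext fun i => (h' i).2.2.2⟩

variable {n : ℕ}

lemma combSet_eq_image (S₁ S₂ S₃ S₄ : Set (Fin n → F)) :
    combSet F R u v S₁ S₂ S₃ S₄ = idempotentFormVec u v '' (S₁ ×ˢ S₂ ×ˢ S₃ ×ˢ S₄) := by
  ext x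
  constructor
  · rintro ⟨a, ha, b, hb, c, hc, d, hd, rfl⟩
    exact ⟨(a, b, c, d), ⟨ha, hb, hc, hd⟩, rfl⟩
  · rintro ⟨⟨a, b, c, d⟩, ⟨ha, hb, hc, hd⟩, rfl⟩
    exact ⟨a, ha, b, hb, c, hc, d, hd, rfl⟩

lemma combSet_eq_combSet_iff (hinj : Injective (stdForm F R u v))
    {S₁ S₂ S₃ S₄ T₁ T₂ T₃ T₄ : Set (Fin n → F)}
    (h₁ : S₁.Nonempty) (h₂ : S₂.Nonempty) (h₃ : S₃.Nonempty) (h₄ : S₄.Nonempty) :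
    combSet F R u v S₁ S₂ S₃ S₄ = combSet F R u v T₁ T₂ T₃ T₄ ↔
      S₁ = T₁ ∧ S₂ = T₂ ∧ S₃ = T₃ ∧ S₄ = T₄ := by
  rw [combSet_eq_image, combSet_eq_image,
    (idempotentFormVec_injective u v hinj).image_injective.eq_iff,
    prod_eq_prod_iff_of_nonempty (h₁.prod (h₂.prod (h₃.prod h₄))),
    prod_eq_prod_iff_of_nonempty (h₂.prod (h₃.prod h₄)), prod_eq_prod_iff_of_nonempty (h₃.prod h₄)]

variable [NeZero n]

lemma skewShift_comp_idempotentFormVec (φ : F →+* F) {θ : R → R}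
    (hθ : ∀ a b c d : F, θ (stdForm F R u v (a, b, c, d)) = stdForm F R u v (φ a, φ b, φ c, φ d)) :
    skewShift θ ∘ idempotentFormVec u v = idempotentFormVec u v ∘ Prod.map (skewShift (n := n) φ)
      (Prod.map (skewShift φ) (Prod.map (skewShift φ) (skewShift φ))) :=
  funext fun _ => funext fun _ => apply_idempotentForm u v φ hθ ..

lemma image_skewShift_combSet (φ : F →+* F) {θ : R → R}
    (hθ : ∀ a b c d : F, θ (stdForm F R u v (a, b, c, d)) = stdForm F R u v (φ a, φ b, φ c, φ d))
    (S₁ S₂ S₃ S₄ : Set (Fin n → F)) :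
    skewShift θ '' combSet F R u v S₁ S₂ S₃ S₄ =
      combSet F R u v (skewShift φ '' S₁) (skewShift φ '' S₂) (skewShift φ '' S₃)
        (skewShift φ '' S₄) := by
  rw [combSet_eq_image, combSet_eq_image, ← image_comp, skewShift_comp_idempotentFormVec u v φ hθ,
    image_comp, prodMap_image_prod, prodMap_image_prod, prodMap_image_prod]

end IdempotentDecomposition

theorem stmt9_general (p m t : ℕ) (hp : p.Prime)
    (F : Type*) [Field F] [Fintype F] (hF : Fintype.card F = p ^ m)
    (R : Type*) [CommRing R] [Algebra F R] (u v : R)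
    (hbij : Function.Bijective (stdForm F R u v))
    (θ : R → R)
    (hθ : ∀ a b c d : F, θ (stdForm F R u v (a, b, c, d)) =
      stdForm F R u v (a ^ p ^ t, b ^ p ^ t, c ^ p ^ t, d ^ p ^ t))
    (n : ℕ) [NeZero n]
    (C : Submodule R (Fin n → R)) (C₁ C₂ C₃ C₄ : Submodule F (Fin n → F))
    (hC : (C : Set (Fin n → R)) = combSet F R u v (C₁ : Set (Fin n → F)) C₂ C₃ C₄) :
    skewShift θ '' (C : Set (Fin n → R)) = C ↔
      (skewShift (fun a : F => a ^ p ^ t) '' (C₁ : Set (Fin n → F)) = C₁ ∧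
       skewShift (fun a : F => a ^ p ^ t) '' (C₂ : Set (Fin n → F)) = C₂ ∧
       skewShift (fun a : F => a ^ p ^ t) '' (C₃ : Set (Fin n → F)) = C₃ ∧
       skewShift (fun a : F => a ^ p ^ t) '' (C₄ : Set (Fin n → F)) = C₄) := by
  have : Fact p.Prime := ⟨hp⟩
  have : CharP F p := charP_of_card_eq_prime_pow hF
  rw [hC, image_skewShift_combSet u v (iterateFrobenius F p t) hθ]
  exact combSet_eq_combSet_iff u v hbij.injective (.image _ ⟨0, C₁.zero_mem⟩)
    (.image _ ⟨0, C₂.zero_mem⟩) (.image _ ⟨0, C₃.zero_mem⟩) (.image _ ⟨0, C₄.zero_mem⟩)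

theorem stmt9 (p m t : ℕ) (hp : p.Prime) (hodd : p ≠ 2) (ht : 0 < t) (htm : t ∣ m)
    (F : Type*) [Field F] [Fintype F] (hF : Fintype.card F = p ^ m)
    (R : Type*) [CommRing R] [Algebra F R] (u v : R)
    (hu : u * u = u) (hv : v * v = v)
    (hbij : Function.Bijective (stdForm F R u v))
    (θ : R → R)
    (hθ : ∀ a b c d : F, θ (stdForm F R u v (a, b, c, d)) =
      stdForm F R u v (a ^ p ^ t, b ^ p ^ t, c ^ p ^ t, d ^ p ^ t))
    (n : ℕ) [NeZero n]
    (C : Submodule R (Fin n → R)) (C₁ C₂ C₃ C₄ : Submodule F (Fin n → F))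
    (hC : (C : Set (Fin n → R)) = combSet F R u v (C₁ : Set (Fin n → F)) C₂ C₃ C₄) :
    skewShift θ '' (C : Set (Fin n → R)) = C ↔
      (skewShift (fun a : F => a ^ p ^ t) '' (C₁ : Set (Fin n → F)) = C₁ ∧
       skewShift (fun a : F => a ^ p ^ t) '' (C₂ : Set (Fin n → F)) = C₂ ∧
       skewShift (fun a : F => a ^ p ^ t) '' (C₃ : Set (Fin n → F)) = C₃ ∧
       skewShift (fun a : F => a ^ p ^ t) '' (C₄ : Set (Fin n → F)) = C₄) :=
  stmt9_general p m t hp F hF R u v hbij θ hθ n C C₁ C₂ C₃ C₄ hC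
end

section
/- If C = e₁C₁ ⊕ e₂C₂ ⊕ e₃C₃ ⊕ e₄C₄ is a linear code over R with C₁,...,C₄ linear codes over F_q, then the dual code satisfies C^⊥ = e₁C₁^⊥ ⊕ e₂C₂^⊥ ⊕ e₃C₃^⊥ ⊕ e₄C₄^⊥; moreover C is self-dual if and only if each Cᵢ is self-dual. -/
/-- The dual of a code with respect to the standard inner product `x·c = Σ xᵢcᵢ`. -/
def dualSet {S : Type*} [CommRing S] {n : ℕ} (C : Set (Fin n → S)) : Set (Fin n → S) :=
  {x | ∀ c ∈ C, ∑ i, x i * c i = 0}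

/-!
Since `u` and `v` are idempotent, `e₁, e₂, e₃, e₄` are orthogonal idempotents summing to `1`, so
`(a, b, c, d) ↦ e₁a + e₂b + e₃c + e₄d` is a ring homomorphism `F × F × F × F → R`. It differs
from the standard form `a + ub + vc + uvd` by an invertible change of coordinates, hence is a
ring isomorphism. Through it a vector over `R` splits into four vectors over `F`, and `x · c = 0`
over `R` splits into the four component equations over `F`. As every `Cᵢ` contains `0`,
orthogonality to `C` amounts to orthogonality of the `i`-th component to `Cᵢ`; and
`e₁S₁ ⊕ e₂S₂ ⊕ e₃S₃ ⊕ e₄S₄` determines the `Sᵢ` as long as they contain `0`, which gives the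
self-duality criterion.
-/

section IdempotentDecomposition

variable {R : Type*} [CommRing R] {u v : R}

def idempotentHom {F : Type*} [CommSemiring F] [Algebra F R] (hu : u * u = u) (hv : v * v = v) :
    F × F × F × F →+* R where
  toFun x := (1 - u - v + u * v) * algebraMap F R x.1 + (u - u * v) * algebraMap F R x.2.1
    + (v - u * v) * algebraMap F R x.2.2.1 + u * v * algebraMap F R x.2.2.2
  map_one' := by simp only [Prod.fst_one, Prod.snd_one, map_one]; ring
  map_zero' := by simp
  map_add' x y := by simp only [Prod.fst_add, Prod.snd_add, map_add]; ring
  map_mul' x y := by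
    obtain ⟨a₁, a₂, a₃, a₄⟩ := x
    obtain ⟨b₁, b₂, b₃, b₄⟩ := y
    simp only [Prod.mk_mul_mk, map_mul]
    set A₁ := algebraMap F R a₁; set A₂ := algebraMap F R a₂
    set A₃ := algebraMap F R a₃; set A₄ := algebraMap F R a₄
    set B₁ := algebraMap F R b₁; set B₂ := algebraMap F R b₂
    set B₃ := algebraMap F R b₃; set B₄ := algebraMap F R b₄
    linear_combination
      -(v * v * (A₁ - A₂ - A₃ + A₄) * (B₁ - B₂ - B₃ + B₄)
        - v * ((A₁ - A₂) * (2 * B₁ - 2 * B₂ - B₃ + B₄) - (A₃ - A₄) * (B₁ - B₂))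
        + (A₁ - A₂) * (B₁ - B₂)) * hu
      - ((1 - u) * (A₁ - A₃) * (B₁ - B₃) + u * (A₂ - A₄) * (B₂ - B₄)) * hv

/-- Converts coordinates in the basis `e₁, e₂, e₃, e₄` into coordinates in `1, u, v, uv`. -/
def idempotentCoordsToStd {F : Type*} [AddCommGroup F] : F × F × F × F ≃ F × F × F × F where
  toFun x := (x.1, x.2.1 - x.1, x.2.2.1 - x.1, x.1 - x.2.1 - x.2.2.1 + x.2.2.2)
  invFun s := (s.1, s.1 + s.2.1, s.1 + s.2.2.1, s.1 + s.2.1 + s.2.2.1 + s.2.2.2)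
  left_inv x := by ext <;> simp only <;> abel
  right_inv s := by ext <;> simp only <;> abel

variable {F : Type*} [Field F] [Algebra F R]

theorem idempotentHom_eq_stdForm_comp (hu : u * u = u) (hv : v * v = v) :
    ⇑(idempotentHom (F := F) hu hv) = stdForm F R u v ∘ idempotentCoordsToStd := by
  ext ⟨a, b, c, d⟩
  simp only [idempotentHom, idempotentCoordsToStd, stdForm, RingHom.coe_mk, MonoidHom.coe_mk,
    OneHom.coe_mk, Equiv.coe_fn_mk, Function.comp_apply, map_sub, map_add]
  ring

noncomputable def idempotentEquiv (hu : u * u = u) (hv : v * v = v)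
    (hbij : Function.Bijective (stdForm F R u v)) : F × F × F × F ≃+* R :=
  RingEquiv.ofBijective (idempotentHom hu hv) <| by
    rw [idempotentHom_eq_stdForm_comp]
    exact hbij.comp idempotentCoordsToStd.bijective

end IdempotentDecomposition

theorem Prod.sum_mul_eq_zero_iff {ι A B : Type*} [Semiring A] [Semiring B]
    (s : Finset ι) (x y : ι → A × B) :
    ∑ i ∈ s, x i * y i = 0 ↔
      ∑ i ∈ s, (x i).1 * (y i).1 = 0 ∧ ∑ i ∈ s, (x i).2 * (y i).2 = 0 := by
  simp only [Prod.ext_iff, Prod.fst_sum, Prod.snd_sum, Prod.fst_mul, Prod.snd_mul,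
    Prod.fst_zero, Prod.snd_zero]

theorem zero_mem_dualSet {n : ℕ} {S : Type*} [CommRing S] (C : Set (Fin n → S)) :
    0 ∈ dualSet C :=
  fun c _ => by simp

section Codes

variable {F R : Type*} [Field F] [CommRing R] [Algebra F R] {u v : R}
  (hu : u * u = u) (hv : v * v = v) (hbij : Function.Bijective (stdForm F R u v)) {n : ℕ}

include hu hv hbij in
theorem mem_combSet_iff (S₁ S₂ S₃ S₄ : Set (Fin n → F)) (x : Fin n → R) :
    x ∈ combSet F R u v S₁ S₂ S₃ S₄ ↔
      (fun i => ((idempotentEquiv hu hv hbij).symm (x i)).1) ∈ S₁ ∧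
      (fun i => ((idempotentEquiv hu hv hbij).symm (x i)).2.1) ∈ S₂ ∧
      (fun i => ((idempotentEquiv hu hv hbij).symm (x i)).2.2.1) ∈ S₃ ∧
      (fun i => ((idempotentEquiv hu hv hbij).symm (x i)).2.2.2) ∈ S₄ := by
  set e := idempotentEquiv hu hv hbij
  constructor
  · rintro ⟨a, ha, b, hb, c, hc, d, hd, hx⟩
    obtain rfl : x = fun i => e (a i, b i, c i, d i) := hx
    simpa only [e.symm_apply_apply] using ⟨ha, hb, hc, hd⟩
  · rintro ⟨ha, hb, hc, hd⟩
    exact ⟨_, ha, _, hb, _, hc, _, hd, funext fun i => (e.apply_symm_apply (x i)).symm⟩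

include hu hv hbij in
theorem mk_mem_combSet_iff (S₁ S₂ S₃ S₄ : Set (Fin n → F)) (a b c d : Fin n → F) :
    (fun i => idempotentEquiv hu hv hbij (a i, b i, c i, d i)) ∈ combSet F R u v S₁ S₂ S₃ S₄ ↔
      a ∈ S₁ ∧ b ∈ S₂ ∧ c ∈ S₃ ∧ d ∈ S₄ := by
  simp only [mem_combSet_iff hu hv hbij, RingEquiv.symm_apply_apply]

include hu hv hbij in
theorem combSet_eq_combSet_iff_s10 {S₁ S₂ S₃ S₄ T₁ T₂ T₃ T₄ : Set (Fin n → F)}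
    (hS₁ : 0 ∈ S₁) (hS₂ : 0 ∈ S₂) (hS₃ : 0 ∈ S₃) (hS₄ : 0 ∈ S₄)
    (hT₁ : 0 ∈ T₁) (hT₂ : 0 ∈ T₂) (hT₃ : 0 ∈ T₃) (hT₄ : 0 ∈ T₄) :
    combSet F R u v S₁ S₂ S₃ S₄ = combSet F R u v T₁ T₂ T₃ T₄ ↔
      S₁ = T₁ ∧ S₂ = T₂ ∧ S₃ = T₃ ∧ S₄ = T₄ := by
  refine ⟨fun h => ?_, by rintro ⟨rfl, rfl, rfl, rfl⟩; rfl⟩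
  have key (a b c d : Fin n → F) :
      (a ∈ S₁ ∧ b ∈ S₂ ∧ c ∈ S₃ ∧ d ∈ S₄) ↔ (a ∈ T₁ ∧ b ∈ T₂ ∧ c ∈ T₃ ∧ d ∈ T₄) := by
    rw [← mk_mem_combSet_iff hu hv hbij, ← mk_mem_combSet_iff hu hv hbij, h]
  refine ⟨Set.ext fun w => ?_, Set.ext fun w => ?_, Set.ext fun w => ?_, Set.ext fun w => ?_⟩
  · simpa [hS₂, hS₃, hS₄, hT₂, hT₃, hT₄] using key w 0 0 0
  · simpa [hS₁, hS₃, hS₄, hT₁, hT₃, hT₄] using key 0 w 0 0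
  · simpa [hS₁, hS₂, hS₄, hT₁, hT₂, hT₄] using key 0 0 w 0
  · simpa [hS₁, hS₂, hS₃, hT₁, hT₂, hT₃] using key 0 0 0 w

include hu hv hbij in
theorem sum_mul_idempotentEquiv_eq_zero_iff (x : Fin n → R) (a b c d : Fin n → F) :
    ∑ i, x i * idempotentEquiv hu hv hbij (a i, b i, c i, d i) = 0 ↔
      ∑ i, ((idempotentEquiv hu hv hbij).symm (x i)).1 * a i = 0 ∧
      ∑ i, ((idempotentEquiv hu hv hbij).symm (x i)).2.1 * b i = 0 ∧
      ∑ i, ((idempotentEquiv hu hv hbij).symm (x i)).2.2.1 * c i = 0 ∧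
      ∑ i, ((idempotentEquiv hu hv hbij).symm (x i)).2.2.2 * d i = 0 := by
  set e := idempotentEquiv hu hv hbij
  have hsum : ∑ i, x i * e (a i, b i, c i, d i) =
      e (∑ i, e.symm (x i) * (a i, b i, c i, d i)) := by
    simp only [map_sum, map_mul, e.apply_symm_apply]
  rw [hsum, map_eq_zero_iff e e.injective, Prod.sum_mul_eq_zero_iff,
    Prod.sum_mul_eq_zero_iff, Prod.sum_mul_eq_zero_iff]

include hu hv hbij in
theorem dualSet_combSet {S₁ S₂ S₃ S₄ : Set (Fin n → F)}
    (h₁ : 0 ∈ S₁) (h₂ : 0 ∈ S₂) (h₃ : 0 ∈ S₃) (h₄ : 0 ∈ S₄) :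
    dualSet (combSet F R u v S₁ S₂ S₃ S₄) =
      combSet F R u v (dualSet S₁) (dualSet S₂) (dualSet S₃) (dualSet S₄) := by
  ext x
  rw [mem_combSet_iff hu hv hbij]
  have orth_iff (a b c d) := sum_mul_idempotentEquiv_eq_zero_iff hu hv hbij x a b c d
  constructor
  · intro hx
    have orth {a b c d} (ha : a ∈ S₁) (hb : b ∈ S₂) (hc : c ∈ S₃) (hd : d ∈ S₄) :=
      (orth_iff a b c d).1 (hx _ ⟨a, ha, b, hb, c, hc, d, hd, rfl⟩)
    exact ⟨fun a ha => (orth ha h₂ h₃ h₄).1, fun b hb => (orth h₁ hb h₃ h₄).2.1,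
      fun c hc => (orth h₁ h₂ hc h₄).2.2.1, fun d hd => (orth h₁ h₂ h₃ hd).2.2.2⟩
  · rintro ⟨hA, hB, hC, hD⟩ y ⟨a, ha, b, hb, c, hc, d, hd, rfl⟩
    exact (orth_iff a b c d).2 ⟨hA a ha, hB b hb, hC c hc, hD d hd⟩

end Codes

theorem stmt10_general (F : Type*) [Field F]
    (R : Type*) [CommRing R] [Algebra F R] (u v : R)
    (hu : u * u = u) (hv : v * v = v)
    (hbij : Function.Bijective (stdForm F R u v))
    (n : ℕ)
    (C : Submodule R (Fin n → R)) (C₁ C₂ C₃ C₄ : Submodule F (Fin n → F))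
    (hC : (C : Set (Fin n → R)) = combSet F R u v (C₁ : Set (Fin n → F)) C₂ C₃ C₄) :
    dualSet (C : Set (Fin n → R)) =
      combSet F R u v (dualSet (C₁ : Set (Fin n → F))) (dualSet (C₂ : Set (Fin n → F)))
        (dualSet (C₃ : Set (Fin n → F))) (dualSet (C₄ : Set (Fin n → F))) ∧
    ((C : Set (Fin n → R)) = dualSet (C : Set (Fin n → R)) ↔
      ((C₁ : Set (Fin n → F)) = dualSet (C₁ : Set (Fin n → F)) ∧
       (C₂ : Set (Fin n → F)) = dualSet (C₂ : Set (Fin n → F)) ∧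
       (C₃ : Set (Fin n → F)) = dualSet (C₃ : Set (Fin n → F)) ∧
       (C₄ : Set (Fin n → F)) = dualSet (C₄ : Set (Fin n → F)))) := by
  have hdual := dualSet_combSet hu hv hbij C₁.zero_mem C₂.zero_mem C₃.zero_mem C₄.zero_mem
  rw [← hC] at hdual
  refine ⟨hdual, ?_⟩
  rw [hdual, hC]
  exact combSet_eq_combSet_iff_s10 hu hv hbij C₁.zero_mem C₂.zero_mem C₃.zero_mem C₄.zero_mem
    (zero_mem_dualSet _) (zero_mem_dualSet _) (zero_mem_dualSet _) (zero_mem_dualSet _)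

theorem stmt10 (p m : ℕ) (hp : p.Prime) (hodd : p ≠ 2) (hm : 0 < m)
    (F : Type*) [Field F] [Fintype F] (hF : Fintype.card F = p ^ m)
    (R : Type*) [CommRing R] [Algebra F R] (u v : R)
    (hu : u * u = u) (hv : v * v = v)
    (hbij : Function.Bijective (stdForm F R u v))
    (n : ℕ)
    (C : Submodule R (Fin n → R)) (C₁ C₂ C₃ C₄ : Submodule F (Fin n → F))
    (hC : (C : Set (Fin n → R)) = combSet F R u v (C₁ : Set (Fin n → F)) C₂ C₃ C₄) :
    dualSet (C : Set (Fin n → R)) =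
      combSet F R u v (dualSet (C₁ : Set (Fin n → F))) (dualSet (C₂ : Set (Fin n → F)))
        (dualSet (C₃ : Set (Fin n → F))) (dualSet (C₄ : Set (Fin n → F))) ∧
    ((C : Set (Fin n → R)) = dualSet (C : Set (Fin n → R)) ↔
      ((C₁ : Set (Fin n → F)) = dualSet (C₁ : Set (Fin n → F)) ∧
       (C₂ : Set (Fin n → F)) = dualSet (C₂ : Set (Fin n → F)) ∧
       (C₃ : Set (Fin n → F)) = dualSet (C₃ : Set (Fin n → F)) ∧
       (C₄ : Set (Fin n → F)) = dualSet (C₄ : Set (Fin n → F)))) :=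
  stmt10_general F R u v hu hv hbij n C C₁ C₂ C₃ C₄ hC
end

section
/- Let C₁,...,C₄ be skew cyclic codes over F_q generated (as left submodules of F_q[x;θ]/⟨xⁿ-1⟩) by monic right divisors f₁(x),...,f₄(x) of xⁿ-1 in the skew polynomial ring F_q[x;θ]. Then the skew cyclic code C = e₁C₁ ⊕ e₂C₂ ⊕ e₃C₃ ⊕ e₄C₄ over R is generated by the single polynomial f(x) = e₁f₁(x) + e₂f₂(x) + e₃f₃(x) + e₄f₄(x), and f(x) is a right divisor of xⁿ-1 in R[x;θ_t]. -/
open Polynomial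

/-- Multiplication in the skew polynomial ring `S[x;θ]`:
`(a xⁱ) * (b xʲ) = a θⁱ(b) x^(i+j)`. -/
noncomputable def skewMul {S : Type*} [CommRing S] (θ : S → S) (f g : Polynomial S) :
    Polynomial S :=
  ∑ i ∈ f.support, ∑ j ∈ g.support,
    Polynomial.C (f.coeff i * θ^[i] (g.coeff j)) * Polynomial.X ^ (i + j)

/-- Reduction of a skew polynomial modulo `xⁿ - 1`, giving the coefficient vector of the
canonical representative of degree `< n` (using `x^(n+j) ≡ xʲ`). -/
def redMod {S : Type*} [CommRing S] (n : ℕ) [NeZero n] (f : Polynomial S) : Fin n → S :=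
  fun i => ∑ j ∈ f.support.filter (fun j => j % n = (i : ℕ)), f.coeff j

/-- The skew cyclic code (left submodule of `S[x;θ]/⟨xⁿ-1⟩`) generated by `f`. -/
noncomputable def skewGen {S : Type*} [CommRing S] (θ : S → S) (n : ℕ) [NeZero n]
    (f : Polynomial S) : Set (Fin n → S) :=
  {c | ∃ h : Polynomial S, c = redMod n (skewMul θ h f)}

/-!
Because `e₁, …, e₄` are complete orthogonal idempotents, `w ↦ ∑ eₗ wₗ` is a ring homomorphism
`Φ : F_q⁴ → R`; it is onto, and it intertwines the coordinatewise Frobenius `x ↦ x^(p^t)` with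
`θ`. Applying a ring homomorphism to the coefficients commutes with skew multiplication and with
reduction modulo `xⁿ - 1`, so both claims are the images under `Φ` of the same claims over the
product ring `F_q⁴`, where skew multiplication acts coordinatewise and they split into the four
given statements over `F_q`.
-/

section SkewPolynomial

variable {S : Type*} [CommRing S]

theorem skewMul_eq_sum_of_support_subset {θ : S → S} (hθ : θ 0 = 0) {f g : S[X]}
    {s t : Finset ℕ} (hs : f.support ⊆ s) (ht : g.support ⊆ t) :
    skewMul θ f g = ∑ i ∈ s, ∑ j ∈ t, C (f.coeff i * θ^[i] (g.coeff j)) * X ^ (i + j) := by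
  rw [skewMul, ← Finset.sum_subset hs fun i _ hi => by simp [notMem_support_iff.mp hi]]
  refine Finset.sum_congr rfl fun i _ => Finset.sum_subset ht fun j _ hj => ?_
  rw [notMem_support_iff.mp hj, Function.iterate_fixed hθ, mul_zero, C_0, zero_mul]

theorem skewMul_map {A : Type*} [CommRing A] (φ : A →+* S) {σ : A → A} {τ : S → S}
    (hτ : τ 0 = 0) (hφ : Function.Semiconj φ σ τ) (f g : A[X]) :
    skewMul τ (f.map φ) (g.map φ) = (skewMul σ f g).map φ := by
  rw [skewMul_eq_sum_of_support_subset hτ (support_map_subset φ f) (support_map_subset φ g),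
    skewMul]
  simp only [Polynomial.map_sum, Polynomial.map_mul, map_C, Polynomial.map_pow, map_X,
    coeff_map, map_mul, (hφ.iterate_right _).eq]

theorem redMod_eq_sum_of_support_subset {n : ℕ} [NeZero n] {f : S[X]} {s : Finset ℕ}
    (hs : f.support ⊆ s) (i : Fin n) :
    redMod n f i = ∑ j ∈ s with j % n = i, f.coeff j := by
  refine Finset.sum_subset (Finset.filter_subset_filter _ hs) fun j hj hj' => ?_
  by_contra h
  exact hj' (Finset.mem_filter.mpr ⟨mem_support_iff.mpr h, (Finset.mem_filter.mp hj).2⟩)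

theorem redMod_map {A : Type*} [CommRing A] (φ : A →+* S) (n : ℕ) [NeZero n] (f : A[X]) :
    redMod n (f.map φ) = φ ∘ redMod n f := by
  funext i
  rw [Function.comp_apply, redMod_eq_sum_of_support_subset (support_map_subset φ f), redMod,
    map_sum]
  simp only [coeff_map]

theorem skewGen_map {A : Type*} [CommRing A] (φ : A →+* S) (hφ : Function.Surjective φ)
    {σ : A → A} {τ : S → S} (hτ : τ 0 = 0) (hστ : Function.Semiconj φ σ τ) (n : ℕ) [NeZero n]
    (f : A[X]) : skewGen τ n (f.map φ) = (φ ∘ ·) '' skewGen σ n f := by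
  ext c
  constructor
  · rintro ⟨h, rfl⟩
    obtain ⟨H, rfl⟩ := map_surjective φ hφ h
    exact ⟨_, ⟨H, rfl⟩, by rw [skewMul_map φ hτ hστ, redMod_map]⟩
  · rintro ⟨_, ⟨H, rfl⟩, rfl⟩
    exact ⟨H.map φ, by rw [skewMul_map φ hτ hστ, redMod_map]⟩

end SkewPolynomial

section Pi

variable {ι S : Type*} [CommRing S]

theorem map_evalRingHom_skewMul {fr : S → S} (hfr : fr 0 = 0) (H P : (ι → S)[X]) (l : ι) :
    (skewMul (fun w j => fr (w j)) H P).map (Pi.evalRingHom _ l)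
      = skewMul fr (H.map (Pi.evalRingHom _ l)) (P.map (Pi.evalRingHom _ l)) :=
  (skewMul_map _ hfr (fun _ => rfl) H P).symm

variable [Finite ι]

theorem map_evalRingHom_piEquiv_symm (h : ι → S[X]) (l : ι) :
    ((piEquiv fun _ : ι => S).symm h).map (Pi.evalRingHom _ l) = h l :=
  congrFun ((piEquiv _).apply_symm_apply h) l

theorem coeff_piEquiv_symm (h : ι → S[X]) (k : ℕ) (l : ι) :
    ((piEquiv fun _ : ι => S).symm h).coeff k l = (h l).coeff k := by
  rw [← map_evalRingHom_piEquiv_symm h l, coeff_map]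
  rfl

theorem exists_eq_skewMul_pi {fr : S → S} (hfr : fr 0 = 0) {Q P : (ι → S)[X]}
    (h : ∀ l, ∃ g, Q.map (Pi.evalRingHom _ l) = skewMul fr g (P.map (Pi.evalRingHom _ l))) :
    ∃ G, Q = skewMul (fun w j => fr (w j)) G P := by
  choose g hg using h
  refine ⟨(piEquiv _).symm g, (piEquiv _).injective (funext fun l => ?_)⟩
  change Q.map _ = (skewMul _ _ P).map _
  rw [map_evalRingHom_skewMul hfr, map_evalRingHom_piEquiv_symm, hg]

theorem skewGen_pi {fr : S → S} (hfr : fr 0 = 0) (n : ℕ) [NeZero n] (P : (ι → S)[X]) :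
    skewGen (fun w j => fr (w j)) n P
      = {c | ∀ l, (fun i => c i l) ∈ skewGen fr n (P.map (Pi.evalRingHom _ l))} := by
  ext c
  constructor
  · rintro ⟨H, rfl⟩ l
    exact ⟨H.map (Pi.evalRingHom _ l), by rw [← map_evalRingHom_skewMul hfr, redMod_map]; rfl⟩
  · intro hc
    choose h hh using hc
    refine ⟨(piEquiv _).symm h, funext fun i => funext fun l => ?_⟩
    rw [congrFun (hh l) i, ← map_evalRingHom_piEquiv_symm h l, ← map_evalRingHom_skewMul hfr,
      redMod_map]
    rfl

end Pi

namespace CompleteOrthogonalIdempotents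

variable {ι R : Type*} [Fintype ι] [CommRing R] {e : ι → R}

noncomputable def piRingHom (he : CompleteOrthogonalIdempotents e) (S : Type*) [CommRing S]
    [Algebra S R] : (ι → S) →+* R where
  toFun w := ∑ i, e i * algebraMap S R (w i)
  map_one' := by simp [he.complete]
  map_mul' w w' := by
    classical
    simp only [Pi.mul_apply, map_mul, Finset.sum_mul_sum, mul_mul_mul_comm _ (algebraMap S R _),
      he.mul_eq, ite_mul, zero_mul, Finset.sum_ite_eq, Finset.mem_univ, if_true]
  map_zero' := by simp
  map_add' w w' := by simp [mul_add, Finset.sum_add_distrib]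

theorem piRingHom_apply (he : CompleteOrthogonalIdempotents e) (S : Type*) [CommRing S]
    [Algebra S R] (w : ι → S) : he.piRingHom S w = ∑ i, e i * algebraMap S R (w i) := rfl

theorem map_piRingHom_piEquiv_symm (he : CompleteOrthogonalIdempotents e) {S : Type*}
    [CommRing S] [Algebra S R] (h : ι → S[X]) :
    ((piEquiv fun _ : ι => S).symm h).map (he.piRingHom S)
      = ∑ i, C (e i) * (h i).map (algebraMap S R) := by
  ext k
  simp [coeff_map, piRingHom_apply, coeff_piEquiv_symm]

end CompleteOrthogonalIdempotents

section UV

variable {F R : Type*} [Field F] [CommRing R] [Algebra F R] {u v : R}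

def uvIdempotents (u v : R) : Fin 4 → R := ![1 - u - v + u * v, u - u * v, v - u * v, u * v]

theorem completeOrthogonalIdempotents_uvIdempotents (hu : IsIdempotentElem u)
    (hv : IsIdempotentElem v) : CompleteOrthogonalIdempotents (uvIdempotents u v) := by
  rw [CompleteOrthogonalIdempotents.iff_ortho_complete]
  refine ⟨fun i j hij => ?_, by simp only [uvIdempotents, Fin.sum_univ_four, Matrix.cons_val]; ring⟩
  rw [IsIdempotentElem] at hu hv
  fin_cases i <;> fin_cases j <;>
    simp only [uvIdempotents, Fin.zero_eta, Fin.mk_one, Fin.reduceFinMk, Matrix.cons_val, ne_eq,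
      not_true_eq_false] at hij ⊢ <;>
    grind

variable (he : CompleteOrthogonalIdempotents (uvIdempotents u v))

theorem piRingHom_uvIdempotents_eq_stdForm (w : Fin 4 → F) :
    he.piRingHom F w = stdForm F R u v (w 0, w 1 - w 0, w 2 - w 0, w 3 - w 1 - w 2 + w 0) := by
  rw [CompleteOrthogonalIdempotents.piRingHom_apply]
  simp only [Fin.sum_univ_four, uvIdempotents, Matrix.cons_val, stdForm, map_add, map_sub]
  ring

theorem piRingHom_uvIdempotents_surjective (hsurj : Function.Surjective (stdForm F R u v)) :
    Function.Surjective (he.piRingHom F) := by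
  intro r
  obtain ⟨⟨a, b, c, d⟩, rfl⟩ := hsurj r
  refine ⟨![a, a + b, a + c, a + b + c + d], ?_⟩
  rw [piRingHom_uvIdempotents_eq_stdForm]
  congr 1
  simp only [Matrix.cons_val]
  ring_nf

theorem semiconj_piRingHom_uvIdempotents (frob : F →+* F) {θ : R → R}
    (hθ : ∀ a b c d : F, θ (stdForm F R u v (a, b, c, d)) =
      stdForm F R u v (frob a, frob b, frob c, frob d)) :
    Function.Semiconj (he.piRingHom F) (fun w j => frob (w j)) θ := by
  intro w
  simp only [piRingHom_uvIdempotents_eq_stdForm, hθ, map_add, map_sub]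

theorem combSet_eq_image_piRingHom {n : ℕ} (C : Fin 4 → Set (Fin n → F)) :
    combSet F R u v (C 0) (C 1) (C 2) (C 3)
      = (he.piRingHom F ∘ ·) '' {c | ∀ l, (fun i => c i l) ∈ C l} := by
  have hΦ (c : Fin n → Fin 4 → F) : he.piRingHom F ∘ c = fun i =>
      (1 - u - v + u * v) * algebraMap F R (c i 0) + (u - u * v) * algebraMap F R (c i 1)
        + (v - u * v) * algebraMap F R (c i 2) + u * v * algebraMap F R (c i 3) := by
    funext i
    simp only [Function.comp_apply, CompleteOrthogonalIdempotents.piRingHom_apply,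
      Fin.sum_univ_four, uvIdempotents, Matrix.cons_val]
  ext x
  simp only [Set.mem_image, Set.mem_ofPred_eq, hΦ]
  constructor
  · rintro ⟨a, ha, b, hb, c, hc, d, hd, rfl⟩
    refine ⟨fun i => ![a i, b i, c i, d i], fun l => ?_, rfl⟩
    fin_cases l <;> assumption
  · rintro ⟨c, hc, rfl⟩
    exact ⟨_, hc 0, _, hc 1, _, hc 2, _, hc 3, rfl⟩

end UV

theorem stmt11_general (p m t : ℕ) (hp : p.Prime)
    (F : Type*) [Field F] [Fintype F] (hF : Fintype.card F = p ^ m)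
    (R : Type*) [CommRing R] [Algebra F R] (u v : R)
    (hu : u * u = u) (hv : v * v = v)
    (hbij : Function.Bijective (stdForm F R u v))
    (θ : R → R)
    (hθ : ∀ a b c d : F, θ (stdForm F R u v (a, b, c, d)) =
      stdForm F R u v (a ^ p ^ t, b ^ p ^ t, c ^ p ^ t, d ^ p ^ t))
    (n : ℕ) [NeZero n]
    (f₁ f₂ f₃ f₄ : Polynomial F)
    (hdvd₁ : ∃ h : Polynomial F, (X ^ n - 1 : Polynomial F) = skewMul (· ^ p ^ t) h f₁)
    (hdvd₂ : ∃ h : Polynomial F, (X ^ n - 1 : Polynomial F) = skewMul (· ^ p ^ t) h f₂)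
    (hdvd₃ : ∃ h : Polynomial F, (X ^ n - 1 : Polynomial F) = skewMul (· ^ p ^ t) h f₃)
    (hdvd₄ : ∃ h : Polynomial F, (X ^ n - 1 : Polynomial F) = skewMul (· ^ p ^ t) h f₄) :
    let ι := algebraMap F R
    let fmix : Polynomial R :=
      Polynomial.C (1 - u - v + u * v) * f₁.map ι + Polynomial.C (u - u * v) * f₂.map ι
        + Polynomial.C (v - u * v) * f₃.map ι + Polynomial.C (u * v) * f₄.map ι
    -- the code e₁⟨f₁⟩ ⊕ e₂⟨f₂⟩ ⊕ e₃⟨f₃⟩ ⊕ e₄⟨f₄⟩ is generated by the single polynomial fmix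
    combSet F R u v (skewGen (· ^ p ^ t) n f₁) (skewGen (· ^ p ^ t) n f₂)
        (skewGen (· ^ p ^ t) n f₃) (skewGen (· ^ p ^ t) n f₄) = skewGen θ n fmix ∧
    -- and fmix is a right divisor of xⁿ - 1 in R[x;θ]
    (∃ h : Polynomial R, (X ^ n - 1 : Polynomial R) = skewMul θ h fmix) := by
  intro ι fmix
  have : Fact p.Prime := ⟨hp⟩
  have : CharP F p := charP_of_card_eq_prime_pow hF
  have he := completeOrthogonalIdempotents_uvIdempotents hu hv
  set Φ := he.piRingHom F
  set fv : Fin 4 → F[X] := ![f₁, f₂, f₃, f₄]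
  set P := (piEquiv fun _ : Fin 4 => F).symm fv
  have hfr0 : (0 : F) ^ p ^ t = 0 := zero_pow (pow_ne_zero t hp.ne_zero)
  have hΦθ : Function.Semiconj Φ (fun w j => w j ^ p ^ t) θ :=
    semiconj_piRingHom_uvIdempotents he (iterateFrobenius F p t) hθ
  have hθ0 : θ 0 = 0 := by
    rw [← map_zero Φ, ← hΦθ 0]
    exact congrArg Φ (funext fun _ => hfr0)
  have hfmix : fmix = P.map Φ := by
    rw [CompleteOrthogonalIdempotents.map_piRingHom_piEquiv_symm, Fin.sum_univ_four]
    rfl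
  refine ⟨?_, ?_⟩
  · rw [hfmix, skewGen_map Φ (piRingHom_uvIdempotents_surjective he hbij.2) hθ0 hΦθ,
      skewGen_pi (fr := (· ^ p ^ t)) hfr0]
    simp only [P, map_evalRingHom_piEquiv_symm]
    exact combSet_eq_image_piRingHom he fun l => skewGen (· ^ p ^ t) n (fv l)
  · obtain ⟨G, hG⟩ : ∃ G, (X ^ n - 1 : (Fin 4 → F)[X]) = skewMul (fun w j => w j ^ p ^ t) G P := by
      refine exists_eq_skewMul_pi (fr := (· ^ p ^ t)) hfr0 fun l => ?_
      simp only [P, map_evalRingHom_piEquiv_symm, Polynomial.map_sub, Polynomial.map_pow, map_X,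
        Polynomial.map_one]
      fin_cases l <;> assumption
    refine ⟨G.map Φ, ?_⟩
    rw [hfmix, skewMul_map Φ hθ0 hΦθ, ← hG]
    simp

theorem stmt11 (p m t : ℕ) (hp : p.Prime) (hodd : p ≠ 2) (ht : 0 < t) (htm : t ∣ m)
    (F : Type*) [Field F] [Fintype F] (hF : Fintype.card F = p ^ m)
    (R : Type*) [CommRing R] [Algebra F R] (u v : R)
    (hu : u * u = u) (hv : v * v = v)
    (hbij : Function.Bijective (stdForm F R u v))
    (θ : R → R)
    (hθ : ∀ a b c d : F, θ (stdForm F R u v (a, b, c, d)) =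
      stdForm F R u v (a ^ p ^ t, b ^ p ^ t, c ^ p ^ t, d ^ p ^ t))
    (n : ℕ) [NeZero n]
    (f₁ f₂ f₃ f₄ : Polynomial F)
    (hmonic : f₁.Monic ∧ f₂.Monic ∧ f₃.Monic ∧ f₄.Monic)
    (hdvd₁ : ∃ h : Polynomial F, (X ^ n - 1 : Polynomial F) = skewMul (· ^ p ^ t) h f₁)
    (hdvd₂ : ∃ h : Polynomial F, (X ^ n - 1 : Polynomial F) = skewMul (· ^ p ^ t) h f₂)
    (hdvd₃ : ∃ h : Polynomial F, (X ^ n - 1 : Polynomial F) = skewMul (· ^ p ^ t) h f₃)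
    (hdvd₄ : ∃ h : Polynomial F, (X ^ n - 1 : Polynomial F) = skewMul (· ^ p ^ t) h f₄) :
    let ι := algebraMap F R
    let fmix : Polynomial R :=
      Polynomial.C (1 - u - v + u * v) * f₁.map ι + Polynomial.C (u - u * v) * f₂.map ι
        + Polynomial.C (v - u * v) * f₃.map ι + Polynomial.C (u * v) * f₄.map ι
    -- the code e₁⟨f₁⟩ ⊕ e₂⟨f₂⟩ ⊕ e₃⟨f₃⟩ ⊕ e₄⟨f₄⟩ is generated by the single polynomial fmix
    combSet F R u v (skewGen (· ^ p ^ t) n f₁) (skewGen (· ^ p ^ t) n f₂)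
        (skewGen (· ^ p ^ t) n f₃) (skewGen (· ^ p ^ t) n f₄) = skewGen θ n fmix ∧
    -- and fmix is a right divisor of xⁿ - 1 in R[x;θ]
    (∃ h : Polynomial R, (X ^ n - 1 : Polynomial R) = skewMul θ h fmix) :=
  stmt11_general p m t hp F hF R u v hu hv hbij θ hθ n f₁ f₂ f₃ f₄ hdvd₁ hdvd₂ hdvd₃ hdvd₄
end

section
/- If n is odd and α ∈ R is a unit with α² = 1, then the map ρ : R[x;θ_t]/⟨xⁿ-1⟩ → R[x;θ_t]/⟨xⁿ-α⟩ given by ρ(f(x)) = f(αx) is a well-defined left R-module isomorphism. -/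
/-! For odd `n`, `α² = 1` gives `α^(n+1) = 1`, hence `α^(j / n + j) = α^(j % n)`: the weight `αʲ`
picked up by the coefficient of `xʲ` under `f(x) ↦ f(αx)`, times the weight `α^(j / n)` from
reducing modulo `xⁿ - α`, is exactly the weight `α^(j % n)` that `ρ` puts on the reduced
coefficient. Being diagonal with entries squaring to `1`, `ρ` is an `R`-linear involution. -/

open Polynomial

/-- Reduction of a skew polynomial modulo `xⁿ - α` (for `α` fixed by the automorphism),
giving the coefficient vector of the canonical representative of degree `< n`
(using `x^(n+j) ≡ α xʲ`). -/
def redModC {S : Type*} [CommRing S] (n : ℕ) [NeZero n] (α : S) (f : Polynomial S) :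
    Fin n → S :=
  fun i => ∑ j ∈ f.support.filter (fun j => j % n = (i : ℕ)), α ^ (j / n) * f.coeff j

/-- The substitution `f(x) ↦ f(αx)`, sending `Σ aᵢxⁱ` to `Σ aᵢαⁱxⁱ`. -/
noncomputable def substC {S : Type*} [CommRing S] (α : S) (f : Polynomial S) :
    Polynomial S :=
  ∑ i ∈ f.support, Polynomial.C (f.coeff i * α ^ i) * Polynomial.X ^ i

section

variable {S : Type*} [CommRing S]

lemma substC_coeff (α : S) (f : S[X]) (k : ℕ) : (substC α f).coeff k = f.coeff k * α ^ k := by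
  simp only [substC, finsetSum_coeff, coeff_C_mul_X_pow]
  rw [Finset.sum_ite_eq]
  split_ifs with hk
  · rfl
  · rw [notMem_support_iff.mp hk, zero_mul]

lemma support_substC_subset (α : S) (f : S[X]) : (substC α f).support ⊆ f.support := by
  intro k hk
  rw [mem_support_iff, substC_coeff] at hk
  exact mem_support_iff.mpr (left_ne_zero_of_mul hk)

lemma redModC_eq_sum_of_support_subset (n : ℕ) [NeZero n] (α : S) {f : S[X]} {s : Finset ℕ}
    (hs : f.support ⊆ s) (i : Fin n) :
    redModC n α f i = ∑ j ∈ s with j % n = i, α ^ (j / n) * f.coeff j := by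
  refine Finset.sum_subset (Finset.filter_subset_filter _ hs) fun j _ hj => ?_
  have hcoeff : f.coeff j = 0 := by
    by_contra hne
    exact hj (Finset.mem_filter.mpr ⟨mem_support_iff.mpr hne, by simp_all⟩)
  rw [hcoeff, mul_zero]

lemma pow_div_add_self_eq_pow_mod {M : Type*} [Monoid M] {α : M} {n : ℕ} (h : α ^ (n + 1) = 1)
    (j : ℕ) : α ^ (j / n + j) = α ^ (j % n) := by
  have hj : j / n + j = (n + 1) * (j / n) + j % n := by
    linarith [Nat.div_add_mod j n]
  rw [hj, pow_add, pow_mul, h, one_pow, one_mul]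

lemma pow_succ_eq_one_of_sq_eq_one {M : Type*} [Monoid M] {α : M} (hα2 : α ^ 2 = 1) {n : ℕ}
    (hn : Odd n) : α ^ (n + 1) = 1 := by
  obtain ⟨k, rfl⟩ := hn
  rw [show 2 * k + 1 + 1 = 2 * (k + 1) by ring, pow_mul, hα2, one_pow]

lemma pow_mul_redModC_one_eq_redModC_substC {α : S} {n : ℕ} [NeZero n] (h : α ^ (n + 1) = 1)
    (f : S[X]) (i : Fin n) :
    α ^ (i : ℕ) * redModC n 1 f i = redModC n α (substC α f) i := by
  rw [redModC_eq_sum_of_support_subset n α (support_substC_subset α f), redModC, Finset.mul_sum]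
  refine Finset.sum_congr rfl fun j hj => ?_
  rw [substC_coeff, one_pow, ← (Finset.mem_filter.mp hj).2, ← pow_div_add_self_eq_pow_mod h,
    pow_add]
  ring

end

theorem stmt12_general
    (R : Type*) [CommRing R]
    (α : R) (hα2 : α ^ 2 = 1)
    (n : ℕ) [NeZero n] (hn : Odd n) :
    -- ρ on canonical representatives of the quotients: (c₀,...,c_{n-1}) ↦ (α⁰c₀,...,α^{n-1}c_{n-1})
    let ρ : (Fin n → R) → (Fin n → R) := fun c i => α ^ (i : ℕ) * c i
    -- ρ is well defined: it intertwines reduction mod xⁿ-1 with reduction of f(αx) mod xⁿ-α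
    (∀ f : Polynomial R, ρ (redModC n 1 f) = redModC n α (substC α f)) ∧
    -- ρ is a bijection
    Function.Bijective ρ ∧
    -- ρ is a left R-module homomorphism
    (∀ (r : R) (c c' : Fin n → R),
      ρ (fun i => r * c i + c' i) = fun i => r * ρ c i + ρ c' i) := by
  intro ρ
  have hinv : Function.Involutive ρ := fun c => funext fun i => by
    rw [show ρ (ρ c) i = (α ^ 2) ^ (i : ℕ) * c i by simp only [ρ]; ring, hα2, one_pow, one_mul]
  refine ⟨fun f => funext (pow_mul_redModC_one_eq_redModC_substC
    (pow_succ_eq_one_of_sq_eq_one hα2 hn) f), hinv.bijective, fun r c c' => funext fun i => ?_⟩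
  simp only [ρ]
  ring

theorem stmt12 (p m t : ℕ) (hp : p.Prime) (hodd : p ≠ 2) (ht : 0 < t) (htm : t ∣ m)
    (F : Type*) [Field F] [Fintype F] (hF : Fintype.card F = p ^ m)
    (R : Type*) [CommRing R] [Algebra F R] (u v : R)
    (hu : u * u = u) (hv : v * v = v)
    (hbij : Function.Bijective (stdForm F R u v))
    (θ : R → R)
    (hθ : ∀ a b c d : F, θ (stdForm F R u v (a, b, c, d)) =
      stdForm F R u v (a ^ p ^ t, b ^ p ^ t, c ^ p ^ t, d ^ p ^ t))
    (α : R) (hα : IsUnit α) (hαfix : θ α = α) (hα2 : α ^ 2 = 1)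
    (n : ℕ) [NeZero n] (hn : Odd n) :
    -- ρ on canonical representatives of the quotients: (c₀,...,c_{n-1}) ↦ (α⁰c₀,...,α^{n-1}c_{n-1})
    let ρ : (Fin n → R) → (Fin n → R) := fun c i => α ^ (i : ℕ) * c i
    -- ρ is well defined: it intertwines reduction mod xⁿ-1 with reduction of f(αx) mod xⁿ-α
    (∀ f : Polynomial R, ρ (redModC n 1 f) = redModC n α (substC α f)) ∧
    -- ρ is a bijection
    Function.Bijective ρ ∧
    -- ρ is a left R-module homomorphism
    (∀ (r : R) (c c' : Fin n → R),
      ρ (fun i => r * c i + c' i) = fun i => r * ρ c i + ρ c' i) :=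
  stmt12_general R α hα2 n hn
end

section
/- Let n be odd, α ∈ R a unit fixed by θ_t with α² = 1, and define the permutation μ on Rⁿ by μ(c₀, c₁, ..., c_{n-1}) = (c₀, αc₁, α²c₂, ..., α^{n-1}c_{n-1}). Then a linear code C ⊆ Rⁿ is skew cyclic if and only if μ(C) is skew α-constacyclic. -/
/-- The skew `α`-constacyclic shift `τ_α` with respect to `θ`:
`τ_α(c₀,...,c_{n-1}) = (α θ(c_{n-1}), θ(c₀), ..., θ(c_{n-2}))`. -/
def skewConstaShift {R : Type*} [Mul R] [One R] [DecidableEq R] (θ : R → R) (α : R)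
    {n : ℕ} [NeZero n] (x : Fin n → R) : Fin n → R :=
  fun i => (if i = 0 then α else 1) * θ (x (i - 1))

lemma stdForm_mul (F R : Type*) [Field F] [CommRing R] [Algebra F R] (u v : R)
    (hu : u * u = u) (hv : v * v = v) (a b c d a' b' c' d' : F) :
    stdForm F R u v (a, b, c, d) * stdForm F R u v (a', b', c', d') =
      stdForm F R u v (a * a', a * b' + b * a' + b * b', a * c' + c * a' + c * c',
        a * d' + d * a' + b * c' + c * b' + b * d' + d * b' + c * d' + d * c' + d * d') := by
  have hu2 : u ^ 2 = u := by rw [sq, hu]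
  have hv2 : v ^ 2 = v := by rw [sq, hv]
  simp only [stdForm, map_mul, map_add]
  ring_nf
  rw [hu2, hv2]
  ring

lemma map_mul_of_map_stdForm {F R : Type*} [Field F] [CommRing R] [Algebra F R] {u v : R}
    (hu : u * u = u) (hv : v * v = v) (hsurj : Function.Surjective (stdForm F R u v))
    (φ : F →+* F) {θ : R → R}
    (hθ : ∀ a b c d : F, θ (stdForm F R u v (a, b, c, d)) =
      stdForm F R u v (φ a, φ b, φ c, φ d)) (x y : R) :
    θ (x * y) = θ x * θ y := by
  obtain ⟨⟨a, b, c, d⟩, rfl⟩ := hsurj x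
  obtain ⟨⟨a', b', c', d'⟩, rfl⟩ := hsurj y
  simp only [stdForm_mul F R u v hu hv, hθ, map_add, map_mul]

lemma pow_eq_pow_of_sq_eq_one {M : Type*} [Monoid M] {α : M} (hα : α ^ 2 = 1) {a b : ℕ}
    (hab : a ≡ b [MOD 2]) : α ^ a = α ^ b := by
  rw [← Nat.mod_add_div a 2, ← Nat.mod_add_div b 2, pow_add, pow_add, pow_mul, pow_mul, hα,
    one_pow, one_pow, hab]

lemma map_pow_mul_of_map_mul {R : Type*} [Monoid R] {θ : R → R}
    (hθ : ∀ x y, θ (x * y) = θ x * θ y) {α : R} (hαθ : θ α = α) (k : ℕ) (x : R) :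
    θ (α ^ k * x) = α ^ k * θ x := by
  induction k with
  | zero => simp
  | succ k ih => rw [pow_succ', mul_assoc, hθ, ih, hαθ, mul_assoc]

section Twist

variable {R : Type*} [CommRing R] {n : ℕ}

/-- The map `μ` of the paper. -/
def twist (α : R) (c : Fin n → R) : Fin n → R := fun i => α ^ (i : ℕ) * c i

lemma twist_involutive {α : R} (hα : α ^ 2 = 1) : Function.Involutive (twist (n := n) α) := by
  intro c
  funext i
  simp only [twist, ← mul_assoc, ← pow_add, ← two_mul, pow_mul, hα, one_pow, one_mul]

/-- In coordinate `0` the factors combine to `α * α ^ (n - 1) = α ^ n = α` because `n` is odd;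
elsewhere `α ^ (i - 1) = α ^ (i + 1)` because `α ^ 2 = 1`. -/
lemma skewConstaShift_twist [DecidableEq R] [NeZero n] {θ : R → R}
    (hθ : ∀ x y, θ (x * y) = θ x * θ y) {α : R} (hαθ : θ α = α) (hα : α ^ 2 = 1)
    (hn : Odd n) (c : Fin n → R) :
    skewConstaShift θ α (twist α c) = twist α (α • skewShift θ c) := by
  obtain ⟨k, rfl⟩ : ∃ k, n = k + 1 := Nat.exists_eq_succ_of_ne_zero (NeZero.ne n)
  funext i
  simp only [skewConstaShift, twist, skewShift, Pi.smul_apply, smul_eq_mul,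
    map_pow_mul_of_map_mul hθ hαθ, ← mul_assoc]
  congr 1
  rw [Fin.coe_sub_one, ← pow_succ]
  split_ifs with hi
  · subst hi
    rw [← pow_succ']
    refine pow_eq_pow_of_sq_eq_one hα ?_
    obtain ⟨j, hj⟩ := hn
    simp only [Fin.val_zero, Nat.ModEq]
    omega
  · rw [one_mul]
    refine pow_eq_pow_of_sq_eq_one hα ?_
    have : (i : ℕ) ≠ 0 := Fin.val_ne_zero_iff.mpr hi
    simp only [Nat.ModEq]
    omega

lemma involutive_smul_of_sq_eq_one {M : Type*} [AddCommGroup M] [Module R M] {α : R}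
    (hα : α ^ 2 = 1) : Function.Involutive (α • · : M → M) := fun x => by
  simp only [smul_smul, ← sq, hα, one_smul]

lemma Submodule.image_smul_of_sq_eq_one {M : Type*} [AddCommGroup M] [Module R M] {α : R}
    (hα : α ^ 2 = 1) (C : Submodule R M) : (α • ·) '' (C : Set M) = C :=
  (Set.image_subset_iff.mpr fun _ hx => C.smul_mem α hx).antisymm fun x hx =>
    ⟨α • x, C.smul_mem α hx, involutive_smul_of_sq_eq_one hα x⟩

theorem skewShift_image_eq_iff_skewConstaShift_image_twist [DecidableEq R] [NeZero n]
    {θ : R → R} (hθ : ∀ x y, θ (x * y) = θ x * θ y) {α : R} (hαθ : θ α = α) (hα : α ^ 2 = 1)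
    (hn : Odd n) (C : Submodule R (Fin n → R)) :
    skewShift θ '' (C : Set (Fin n → R)) = C ↔
      skewConstaShift θ α '' (twist α '' (C : Set (Fin n → R))) = twist α '' C := by
  have himage : skewConstaShift θ α '' (twist α '' (C : Set (Fin n → R))) =
      twist α '' ((α • ·) '' (skewShift θ '' C)) := by
    simp only [Set.image_image, skewConstaShift_twist hθ hαθ hα hn]
  rw [himage, Set.image_eq_image (twist_involutive hα).injective]
  calc skewShift θ '' (C : Set (Fin n → R)) = C
      ↔ (α • ·) '' (skewShift θ '' (C : Set (Fin n → R))) = (α • ·) '' C :=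
        (Set.image_eq_image (involutive_smul_of_sq_eq_one hα).injective).symm
    _ ↔ _ := by rw [C.image_smul_of_sq_eq_one hα]

end Twist

theorem stmt13_general (p m t : ℕ) (hp : p.Prime)
    (F : Type*) [Field F] [Fintype F] (hF : Fintype.card F = p ^ m)
    (R : Type*) [CommRing R] [DecidableEq R] [Algebra F R] (u v : R)
    (hu : u * u = u) (hv : v * v = v)
    (hbij : Function.Bijective (stdForm F R u v))
    (θ : R → R)
    (hθ : ∀ a b c d : F, θ (stdForm F R u v (a, b, c, d)) =
      stdForm F R u v (a ^ p ^ t, b ^ p ^ t, c ^ p ^ t, d ^ p ^ t))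
    (α : R) (hαfix : θ α = α) (hα2 : α ^ 2 = 1)
    (n : ℕ) [NeZero n] (hn : Odd n) :
    let μ : (Fin n → R) → (Fin n → R) := fun c i => α ^ (i : ℕ) * c i
    ∀ C : Submodule R (Fin n → R),
      skewShift θ '' (C : Set (Fin n → R)) = C ↔
        skewConstaShift θ α '' (μ '' (C : Set (Fin n → R))) = μ '' (C : Set (Fin n → R)) := by
  intro μ C
  have : Fact p.Prime := ⟨hp⟩
  have : CharP F p := charP_of_card_eq_prime_pow hF
  have hθmul : ∀ x y : R, θ (x * y) = θ x * θ y :=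
    map_mul_of_map_stdForm hu hv hbij.2 (iterateFrobenius F p t)
      (by simpa only [iterateFrobenius_def] using hθ)
  exact skewShift_image_eq_iff_skewConstaShift_image_twist hθmul hαfix hα2 hn C

theorem stmt13 (p m t : ℕ) (hp : p.Prime) (hodd : p ≠ 2) (ht : 0 < t) (htm : t ∣ m)
    (F : Type*) [Field F] [Fintype F] (hF : Fintype.card F = p ^ m)
    (R : Type*) [CommRing R] [DecidableEq R] [Algebra F R] (u v : R)
    (hu : u * u = u) (hv : v * v = v)
    (hbij : Function.Bijective (stdForm F R u v))
    (θ : R → R)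
    (hθ : ∀ a b c d : F, θ (stdForm F R u v (a, b, c, d)) =
      stdForm F R u v (a ^ p ^ t, b ^ p ^ t, c ^ p ^ t, d ^ p ^ t))
    (α : R) (hα : IsUnit α) (hαfix : θ α = α) (hα2 : α ^ 2 = 1)
    (n : ℕ) [NeZero n] (hn : Odd n) :
    let μ : (Fin n → R) → (Fin n → R) := fun c i => α ^ (i : ℕ) * c i
    ∀ C : Submodule R (Fin n → R),
      skewShift θ '' (C : Set (Fin n → R)) = C ↔
        skewConstaShift θ α '' (μ '' (C : Set (Fin n → R))) = μ '' (C : Set (Fin n → R)) :=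
  stmt13_general p m t hp F hF R u v hu hv hbij θ hθ α hαfix hα2 n hn
end
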